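/- arXiv:1806.02101 — 4 statements merged into one kernel-verified Lean document; each statement's English description precedes it below -/
import Mathlib

section
/- In a weak Kleene algebra, the denesting law holds: (x + y)* = (x* · y*)*. -/
/-- A weak Kleene algebra over carrier `K` with the given operations.
The order `x ≤ y` is encoded as `add x y = y`. -/
structure IsWKA (K : Type*) (add : K → K → K) (zero : K) (mul : K → K → K)
    (one : K) (star : K → K) : Prop where
  add_assoc : ∀ x y z, add (add x y) z = add x (add y z)
  add_comm : ∀ x y, add x y = add y x
  add_idem : ∀ x, add x x = x
  add_zero : ∀ x, add x zero = x
  mul_assoc : ∀ x y z, mul (mul x y) z = mul x (mul y z)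
  one_mul : ∀ x, mul one x = x
  mul_one : ∀ x, mul x one = x
  left_distrib : ∀ x y z, mul x (add y z) = add (mul x y) (mul x z)
  right_distrib : ∀ x y z, mul (add x y) z = add (mul x z) (mul y z)
  zero_mul : ∀ x, mul zero x = zero
  star_unfold : ∀ x, add (add one (mul x (star x))) (star x) = star x
  star_inductl : ∀ x y z, add (add z (mul x y)) y = y → add (mul (star x) z) y = y
  star_inductr : ∀ x y z, add (add z (mul y x)) y = y → add (mul z (star x)) y = y

section Aux

variable {K : Type*} {add : K → K → K} {zero : K} {mul : K → K → K}
    {one : K} {star : K → K} (hK : IsWKA K add zero mul one star)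

local notation a " ⊑ " b => add a b = b

include hK

theorem WKA.le_trans {a b c : K} (h1 : a ⊑ b) (h2 : b ⊑ c) : a ⊑ c := by
  rw [← h2, ← hK.add_assoc, h1]

theorem WKA.le_add_left (a b : K) : a ⊑ add a b := by
  rw [← hK.add_assoc, hK.add_idem]

theorem WKA.le_add_right (a b : K) : b ⊑ add a b := by
  rw [hK.add_comm a b]; exact WKA.le_add_left hK b a

theorem WKA.add_le {a b c : K} (h1 : a ⊑ c) (h2 : b ⊑ c) : add a b ⊑ c := by
  rw [hK.add_assoc, h2, h1]

theorem WKA.mul_le_mul_left {a b : K} (c : K) (h : a ⊑ b) : mul c a ⊑ mul c b := by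
  rw [← hK.left_distrib, h]

theorem WKA.mul_le_mul_right {a b : K} (c : K) (h : a ⊑ b) : mul a c ⊑ mul b c := by
  rw [← hK.right_distrib, h]

theorem WKA.one_le_star (a : K) : one ⊑ star a :=
  WKA.le_trans hK (WKA.le_trans hK (WKA.le_add_left hK one (mul a (star a)))
    (WKA.le_add_left hK _ (star a))) (by rw [hK.star_unfold]; exact hK.add_idem _)

theorem WKA.mul_star_le_star (a : K) : mul a (star a) ⊑ star a :=
  WKA.le_trans hK (WKA.le_trans hK (WKA.le_add_right hK one (mul a (star a)))
    (WKA.le_add_left hK _ (star a))) (by rw [hK.star_unfold]; exact hK.add_idem _)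

theorem WKA.le_star (a : K) : a ⊑ star a := by
  have h1 : mul a one ⊑ mul a (star a) := WKA.mul_le_mul_left hK a (WKA.one_le_star hK a)
  rw [hK.mul_one] at h1
  exact WKA.le_trans hK h1 (WKA.mul_star_le_star hK a)

theorem WKA.star_mul_star_le_star (a : K) : mul (star a) (star a) ⊑ star a :=
  hK.star_inductl a (star a) (star a)
    (WKA.add_le hK (hK.add_idem (star a)) (WKA.mul_star_le_star hK a))

theorem WKA.star_le_star_of_le_star {a b : K} (h : a ⊑ star b) : star a ⊑ star b := by
  have key : add (mul (star a) one) (star b) = star b := by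
    apply hK.star_inductl
    apply WKA.add_le hK (WKA.one_le_star hK b)
    exact WKA.le_trans hK
      (WKA.mul_le_mul_right hK (star b) h) (WKA.star_mul_star_le_star hK b)
  rwa [hK.mul_one] at key

theorem WKA.star_mono {a b : K} (h : a ⊑ b) : star a ⊑ star b :=
  WKA.star_le_star_of_le_star hK (WKA.le_trans hK h (WKA.le_star hK b))

end Aux

/-- Denesting law: `(x + y)* = (x* · y*)*`. -/
theorem star_denest {K : Type*} {add : K → K → K} {zero : K} {mul : K → K → K}
    {one : K} {star : K → K} (hK : IsWKA K add zero mul one star) (x y : K) :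
    star (add x y) = star (mul (star x) (star y)) := by
  have h1 : add (star (add x y)) (star (mul (star x) (star y)))
      = star (mul (star x) (star y)) := by
    apply WKA.star_mono hK
    apply WKA.add_le hK
    · -- x ≤ x* ≤ x* · y*
      apply WKA.le_trans hK (WKA.le_star hK x)
      have := WKA.mul_le_mul_left hK (star x) (WKA.one_le_star hK y)
      rwa [hK.mul_one] at this
    · apply WKA.le_trans hK (WKA.le_star hK y)
      have := WKA.mul_le_mul_right hK (star y) (WKA.one_le_star hK x)
      rwa [hK.one_mul] at this
  have h2 : add (star (mul (star x) (star y))) (star (add x y))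
      = star (add x y) := by
    apply WKA.star_le_star_of_le_star hK
    have hx : add (star x) (star (add x y)) = star (add x y) :=
      WKA.star_mono hK (WKA.le_add_left hK x y)
    have hy : add (star y) (star (add x y)) = star (add x y) :=
      WKA.star_mono hK (WKA.le_add_right hK x y)
    have := WKA.mul_le_mul_right hK (star y) hx
    apply WKA.le_trans hK this
    apply WKA.le_trans hK (WKA.mul_le_mul_left hK (star (add x y)) hy)
    exact WKA.star_mul_star_le_star hK (add x y)
  rw [← h2, hK.add_comm, h1]
end

section
/- In a weak Kleene algebra, x · x* = x* · x (sliding of star past its argument). -/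
/-- Sliding of star past its argument: `x · x* = x* · x`. -/
theorem star_slide_self {K : Type*} {add : K → K → K} {zero : K} {mul : K → K → K}
    {one : K} {star : K → K} (hK : IsWKA K add zero mul one star) (x : K) :
    mul x (star x) = mul (star x) x := by
  have aa := hK.add_assoc
  have ac := hK.add_comm
  have ai := hK.add_idem
  have ma := hK.mul_assoc
  have om := hK.one_mul
  have mo := hK.mul_one
  have ld := hK.left_distrib
  have rd := hK.right_distrib
  have su := hK.star_unfold x
  set sx := star x with hsx
  have trans : ∀ a b c, add a b = b → add b c = c → add a c = c := by
    intro a b c h1 h2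
    calc add a c = add a (add b c) := by rw [h2]
    _ = add (add a b) c := (aa a b c).symm
    _ = add b c := by rw [h1]
    _ = c := h2
  have split : ∀ a b c, add (add a b) c = c → add a c = c ∧ add b c = c := by
    intro a b c h
    constructor
    · calc add a c = add a (add (add a b) c) := by rw [h]
      _ = add (add a (add a b)) c := (aa _ _ _).symm
      _ = add (add (add a a) b) c := by rw [aa a a b]
      _ = add (add a b) c := by rw [ai]
      _ = c := h
    · calc add b c = add b (add (add a b) c) := by rw [h]
      _ = add (add b (add a b)) c := (aa _ _ _).symm
      _ = add (add (add b a) b) c := by rw [aa b a b]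
      _ = add (add (add a b) b) c := by rw [ac b a]
      _ = add (add a (add b b)) c := by rw [aa a b b]
      _ = add (add a b) c := by rw [ai]
      _ = c := h
  have join : ∀ a b c, add a c = c → add b c = c → add (add a b) c = c := by
    intro a b c h1 h2
    calc add (add a b) c = add a (add b c) := aa a b c
    _ = add a c := by rw [h2]
    _ = c := h1
  obtain ⟨one_le, xsx_le⟩ := split _ _ _ su
  -- x ≤ x·sx
  have x_le_xsx : add x (mul x sx) = mul x sx := by
    calc add x (mul x sx) = add (mul x one) (mul x sx) := by rw [mo]
    _ = mul x (add one sx) := (ld x one sx).symm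
    _ = mul x sx := by rw [one_le]
  -- sx·x ≤ x·sx via star_inductl
  have key1 : add (add x (mul x (mul x sx))) (mul x sx) = mul x sx := by
    have h := congrArg (fun t => mul x t) su
    simp only [ld] at h
    rw [mo] at h
    exact h
  have A : add (mul sx x) (mul x sx) = mul x sx := hK.star_inductl x (mul x sx) x key1
  -- x ≤ sx
  have x_le_sx : add x sx = sx := trans _ _ _ x_le_xsx xsx_le
  -- sx·x ≤ sx
  have sxx_le : add (mul sx x) sx = sx :=
    hK.star_inductl x sx x (join _ _ _ x_le_sx xsx_le)
  -- 1 + sx·x ≤ sx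
  have h2 : add (add one (mul sx x)) sx = sx := join _ _ _ one_le sxx_le
  have key2 : add (add x (mul (mul sx x) x)) (mul sx x) = mul sx x := by
    have h := congrArg (fun t => mul t x) h2
    simp only [rd] at h
    rw [om] at h
    exact h
  have B : add (mul x sx) (mul sx x) = mul sx x := hK.star_inductr x (mul sx x) x key2
  calc mul x sx = add (mul sx x) (mul x sx) := A.symm
  _ = add (mul x sx) (mul sx x) := ac _ _
  _ = mul sx x := B
end

section
/- Let (H, I_H) be a Kleene UTP theory on binary relations: H is idempotent and distributes over non-empty unions; the set of H-healthy relations is closed under relational composition; I_H is H-healthy; I_H is a left and right unit of composition on H-healthy relations; and the top element ⊤_H = H(∅) satisfies ⊤_H ; P = ⊤_H for all H-healthy P. Then the H-healthy relations with union, zero ⊤_H = H(∅), composition, unit I_H, and star P★ = I_H ∪ P⁺ (where P⁺ = ⋃_{n≥1} Pⁿ) form a weak Kleene algebra under the refinement (reverse inclusion) order. -/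
/-- Binary relations on `α`. -/
abbrev Rel' (α : Type*) := Set (α × α)

/-- Relational composition. -/
def rcomp {α : Type*} (P Q : Rel' α) : Rel' α := {p | ∃ b, (p.1, b) ∈ P ∧ (b, p.2) ∈ Q}

/-- Identity relation. -/
def rid {α : Type*} : Rel' α := {p | p.1 = p.2}

/-- `n`-fold relational power: `P⁰ = Id`, `P^(n+1) = P ; Pⁿ`. -/
def rpow {α : Type*} (P : Rel' α) : ℕ → Rel' α
  | 0 => rid
  | n + 1 => rcomp P (rpow P n)

/-- Kleene star: union of all finite powers. -/
def rstar {α : Type*} (P : Rel' α) : Rel' α := ⋃ n, rpow P n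

/-- Test relation for a state predicate `b`. -/
def rtest {α : Type*} (b : α → Prop) : Rel' α := {p | p.1 = p.2 ∧ b p.1}

/-- Kleene plus: `P⁺ = ⋃ₙ P^(n+1)`. -/
def rplus {α : Type*} (P : Rel' α) : Rel' α := ⋃ n, rcomp P (rpow P n)

/-- Theory Kleene star: `P★ = I_H ∪ P⁺`. -/
def kstarH {α : Type*} (IH P : Rel' α) : Rel' α := IH ∪ rplus P

section aux
variable {α : Type*}

lemma rcomp_assoc' (P Q R : Rel' α) : rcomp (rcomp P Q) R = rcomp P (rcomp Q R) := by
  ext ⟨a, c⟩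
  simp only [rcomp, Set.mem_setOf_eq]
  constructor
  · rintro ⟨b, ⟨d, h1, h2⟩, h3⟩; exact ⟨d, h1, b, h2, h3⟩
  · rintro ⟨d, h1, b, h2, h3⟩; exact ⟨b, ⟨d, h1, h2⟩, h3⟩

lemma rcomp_rid' (P : Rel' α) : rcomp P rid = P := by
  ext ⟨a, c⟩; simp [rcomp, rid]

lemma rid_rcomp' (P : Rel' α) : rcomp rid P = P := by
  ext ⟨a, c⟩
  constructor
  · rintro ⟨b, h1, h2⟩; simp only [rid, Set.mem_setOf_eq] at h1; rwa [h1]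
  · intro h; exact ⟨a, rfl, h⟩

lemma rcomp_union_l' (P Q R : Rel' α) : rcomp (P ∪ Q) R = rcomp P R ∪ rcomp Q R := by
  ext ⟨a, c⟩; simp only [rcomp, Set.mem_union, Set.mem_setOf_eq]
  aesop

lemma rcomp_union_r' (P Q R : Rel' α) : rcomp P (Q ∪ R) = rcomp P Q ∪ rcomp P R := by
  ext ⟨a, c⟩; simp only [rcomp, Set.mem_union, Set.mem_setOf_eq]
  aesop

lemma rcomp_mono' {P P' Q Q' : Rel' α} (h1 : P ⊆ P') (h2 : Q ⊆ Q') :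
    rcomp P Q ⊆ rcomp P' Q' := by
  rintro ⟨a, c⟩ ⟨b, hb1, hb2⟩; exact ⟨b, h1 hb1, h2 hb2⟩

lemma rpow_comm' (P : Rel' α) : ∀ n, rcomp (rpow P n) P = rcomp P (rpow P n)
  | 0 => by rw [rpow, rid_rcomp', rcomp_rid']
  | n + 1 => by
    rw [rpow, rcomp_assoc', rpow_comm' P n]

end aux

/-- A Kleene UTP theory `(H, I_H)` induces a weak Kleene algebra on the
`H`-healthy relations, with `0 = H(∅)`, `1 = I_H`, choice `∪`, composition
`rcomp`, and star `P★ = I_H ∪ P⁺` (the order `x ≤ y` being `x ∪ y = y`). -/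
theorem kleene_utp_theory {α : Type*} (H : Rel' α → Rel' α) (IH : Rel' α)
    (hidem : ∀ P, H (H P) = H P)
    (hcont : ∀ S : Set (Rel' α), S.Nonempty → H (⋃₀ S) = ⋃ P ∈ S, H P)
    (hcomp : ∀ P Q, H P = P → H Q = Q → H (rcomp P Q) = rcomp P Q)
    (hIH : H IH = IH)
    (hunitl : ∀ P, H P = P → rcomp IH P = P)
    (hunitr : ∀ P, H P = P → rcomp P IH = P)
    (htop : ∀ P, H P = P → rcomp (H ∅) P = H ∅) :
    -- closure of the operations
    (H (H (∅ : Rel' α)) = H ∅) ∧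
    (∀ P Q, H P = P → H Q = Q → H (P ∪ Q) = P ∪ Q) ∧
    (∀ P, H P = P → H (kstarH IH P) = kstarH IH P) ∧
    -- weak dioid laws on healthy relations
    (∀ P Q R : Rel' α, P ∪ (Q ∪ R) = (P ∪ Q) ∪ R ∧ P ∪ Q = Q ∪ P ∧ P ∪ P = P) ∧
    (∀ P, H P = P → P ∪ H ∅ = P) ∧
    (∀ P Q R : Rel' α, rcomp (rcomp P Q) R = rcomp P (rcomp Q R)) ∧
    (∀ P, H P = P → rcomp IH P = P ∧ rcomp P IH = P) ∧
    (∀ P Q R : Rel' α, rcomp P (Q ∪ R) = rcomp P Q ∪ rcomp P R ∧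
      rcomp (P ∪ Q) R = rcomp P R ∪ rcomp Q R) ∧
    (∀ P, H P = P → rcomp (H ∅) P = H ∅) ∧
    -- weak Kleene algebra star laws on healthy relations
    (∀ P, H P = P →
      (IH ∪ rcomp P (kstarH IH P)) ∪ kstarH IH P = kstarH IH P) ∧
    (∀ P Q R, H P = P → H Q = Q → H R = R →
      (R ∪ rcomp P Q) ∪ Q = Q → rcomp (kstarH IH P) R ∪ Q = Q) ∧
    (∀ P Q R, H P = P → H Q = Q → H R = R →
      (R ∪ rcomp Q P) ∪ Q = Q → rcomp R (kstarH IH P) ∪ Q = Q) := by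
  -- H distributes over binary unions
  have hpair : ∀ P Q : Rel' α, H (P ∪ Q) = H P ∪ H Q := by
    intro P Q
    have h := hcont {P, Q} ⟨P, by simp⟩
    simpa [Set.sUnion_pair] using h
  -- H ∅ is below every healthy relation
  have hzero_le : ∀ P : Rel' α, H P = P → H ∅ ⊆ P := by
    intro P hP
    have h := hpair ∅ P
    rw [Set.empty_union, hP] at h
    intro x hx
    rw [h]; exact Or.inl hx
  -- powers P ; Pⁿ are healthy
  have hpowH : ∀ P : Rel' α, H P = P → ∀ n, H (rcomp P (rpow P n)) = rcomp P (rpow P n) := by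
    intro P hP n
    induction n with
    | zero => rw [rpow, rcomp_rid', hP]
    | succ n ih => rw [rpow]; exact hcomp _ _ hP ih
  -- rplus is healthy
  have hplusH : ∀ P : Rel' α, H P = P → H (rplus P) = rplus P := by
    intro P hP
    have h := hcont (Set.range fun n => rcomp P (rpow P n)) ⟨_, ⟨0, rfl⟩⟩
    rw [Set.sUnion_range, Set.biUnion_range] at h
    have : (⋃ n, H (rcomp P (rpow P n))) = ⋃ n, rcomp P (rpow P n) := by
      apply Set.iUnion_congr; intro n; exact hpowH P hP n
    rw [this] at h
    exact h
  refine ⟨hidem ∅, ?_, ?_, ?_, ?_, ?_, ?_, ?_, htop, ?_, ?_, ?_⟩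
  · intro P Q hP hQ; rw [hpair, hP, hQ]
  · intro P hP
    show H (IH ∪ rplus P) = IH ∪ rplus P
    rw [hpair, hIH, hplusH P hP]
  · intro P Q R
    exact ⟨(Set.union_assoc P Q R).symm, Set.union_comm P Q, Set.union_self P⟩
  · intro P hP; exact Set.union_eq_self_of_subset_right (hzero_le P hP)
  · exact rcomp_assoc'
  · intro P hP; exact ⟨hunitl P hP, hunitr P hP⟩
  · intro P Q R; exact ⟨rcomp_union_r' P Q R, rcomp_union_l' P Q R⟩
  · -- star unfold
    intro P hP
    apply Set.union_eq_self_of_subset_left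
    apply Set.union_subset
    · exact Set.subset_union_left
    · rw [kstarH, rcomp_union_r', hunitr P hP]
      apply Set.union_subset
      · refine Set.subset_union_of_subset_right ?_ IH
        intro x hx
        exact Set.mem_iUnion.mpr ⟨0, by rwa [rpow, rcomp_rid']⟩
      · refine Set.subset_union_of_subset_right ?_ IH
        rintro ⟨a, c⟩ ⟨b, hab, hbc⟩
        obtain ⟨n, hn⟩ := Set.mem_iUnion.mp hbc
        exact Set.mem_iUnion.mpr ⟨n + 1, ⟨b, hab, hn⟩⟩
  · -- left star induction
    intro P Q R hP hQ hR h
    have h' : R ∪ rcomp P Q ⊆ Q := Set.union_eq_right.mp h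
    have hRQ : R ⊆ Q := (Set.union_subset_iff.mp h').1
    have hPQ : rcomp P Q ⊆ Q := (Set.union_subset_iff.mp h').2
    apply Set.union_eq_right.mpr
    have key : ∀ n, rcomp (rpow P n) R ⊆ Q := by
      intro n
      induction n with
      | zero => rw [rpow, rid_rcomp']; exact hRQ
      | succ n ih =>
        rw [rpow, rcomp_assoc']
        exact (rcomp_mono' (subset_refl P) ih).trans hPQ
    rw [kstarH, rcomp_union_l', hunitl R hR]
    apply Set.union_subset hRQ
    rintro ⟨a, c⟩ ⟨b, hab, hbc⟩
    obtain ⟨n, hn⟩ := Set.mem_iUnion.mp hab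
    exact key (n + 1) ⟨b, hn, hbc⟩
  · -- right star induction
    intro P Q R hP hQ hR h
    have h' : R ∪ rcomp Q P ⊆ Q := Set.union_eq_right.mp h
    have hRQ : R ⊆ Q := (Set.union_subset_iff.mp h').1
    have hQP : rcomp Q P ⊆ Q := (Set.union_subset_iff.mp h').2
    apply Set.union_eq_right.mpr
    have key : ∀ n, rcomp R (rpow P n) ⊆ Q := by
      intro n
      induction n with
      | zero => rw [rpow, rcomp_rid']; exact hRQ
      | succ n ih =>
        rw [rpow, ← rpow_comm', ← rcomp_assoc']
        exact (rcomp_mono' ih (subset_refl P)).trans hQP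
    rw [kstarH, rcomp_union_r', hunitr R hR]
    apply Set.union_subset hRQ
    rintro ⟨a, c⟩ ⟨b, hab, hbc⟩
    obtain ⟨n, hn⟩ := Set.mem_iUnion.mp hbc
    exact key (n + 1) ⟨b, hab, hn⟩
end

section
/- In a weak Kleene algebra, (x·y)* · x = x · (y·x)* (the rotation/sliding law). -/
namespace WKAHelper

variable {K : Type*} {add : K → K → K} {zero : K} {mul : K → K → K}
    {one : K} {star : K → K} (hK : IsWKA K add zero mul one star)

include hK

lemma le_trans' {a b c : K} (h1 : add a b = b) (h2 : add b c = c) : add a c = c := by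
  calc add a c = add a (add b c) := by rw [h2]
    _ = add (add a b) c := (hK.add_assoc _ _ _).symm
    _ = add b c := by rw [h1]
    _ = c := h2

lemma add_le {a b c : K} (h1 : add a c = c) (h2 : add b c = c) :
    add (add a b) c = c := by
  rw [hK.add_assoc, h2, h1]

lemma le_add_left (a b : K) : add a (add a b) = add a b := by
  rw [← hK.add_assoc, hK.add_idem]

lemma le_add_right (a b : K) : add b (add a b) = add a b := by
  rw [hK.add_comm a b, ← hK.add_assoc, hK.add_idem]

lemma wmul_le_l {a b : K} (c : K) (h : add a b = b) :
    add (mul c a) (mul c b) = mul c b := by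
  rw [← hK.left_distrib, h]

lemma wmul_le_r {a b : K} (c : K) (h : add a b = b) :
    add (mul a c) (mul b c) = mul b c := by
  rw [← hK.right_distrib, h]

lemma one_le_star (a : K) : add one (star a) = star a :=
  le_trans' hK (le_add_left hK one (mul a (star a))) (hK.star_unfold a)

lemma mul_star_le (a : K) : add (mul a (star a)) (star a) = star a :=
  le_trans' hK (le_add_right hK one (mul a (star a))) (hK.star_unfold a)

lemma self_le_star (a : K) : add a (star a) = star a := by
  have h1 : add (mul a one) (mul a (star a)) = mul a (star a) :=
    wmul_le_l hK a (one_le_star hK a)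
  rw [hK.mul_one] at h1
  exact le_trans' hK h1 (mul_star_le hK a)

lemma star_mul_le (a : K) : add (mul (star a) a) (star a) = star a := by
  apply hK.star_inductl
  exact add_le hK (self_le_star hK a) (mul_star_le hK a)

end WKAHelper

open WKAHelper in
/-- Rotation/sliding law: `(x·y)* · x = x · (y·x)*`. -/
theorem star_rotate {K : Type*} {add : K → K → K} {zero : K} {mul : K → K → K}
    {one : K} {star : K → K} (hK : IsWKA K add zero mul one star) (x y : K) :
    mul (star (mul x y)) x = mul x (star (mul y x)) := by
  set L := mul (star (mul x y)) x with hL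
  set R := mul x (star (mul y x)) with hR
  have h1 : add L R = R := by
    apply hK.star_inductl
    have e1 : mul (mul x y) R = mul x (mul (mul y x) (star (mul y x))) := by
      rw [hR, hK.mul_assoc x y _, ← hK.mul_assoc y x _, ← hK.mul_assoc x _ _]
    have e2 : add x (mul (mul x y) R) = mul x (add one (mul (mul y x) (star (mul y x)))) := by
      rw [e1, hK.left_distrib, hK.mul_one]
    rw [e2]
    exact wmul_le_l hK x (hK.star_unfold (mul y x))
  have h2 : add R L = L := by
    have := hK.star_inductr (mul y x) L x ?_
    · rwa [← hR] at this
    · have e1 : mul L (mul y x) = mul (mul (star (mul x y)) (mul x y)) x := by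
        rw [hL, hK.mul_assoc, hK.mul_assoc, ← hK.mul_assoc x y x]
      have e2 : add x (mul L (mul y x)) =
          mul (add one (mul (star (mul x y)) (mul x y))) x := by
        rw [e1, hK.right_distrib, hK.one_mul]
      rw [e2, hL]
      apply wmul_le_r hK x
      exact add_le hK (one_le_star hK (mul x y)) (star_mul_le hK (mul x y))
  calc L = add R L := h2.symm
    _ = add L R := hK.add_comm _ _
    _ = R := h1
end
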